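/- Suppose X is Hausdorff, κ infinite, and X = ⋃_{α<λ} X_α is an increasing union with F(X_α) ≤ κ, ψ(X_α) ≤ κ, and L(X_α) ≤ κ for all α < λ. Then |X| ≤ 2^κ. -/

import Mathlib

/-!
Hausdorffness and `ψ, L ≤ κ` give every `X_α` closed pseudocharacter `≤ κ`, with closures taken
in `X`. Then a `κ`-sized set has closure of size `≤ 2^κ`, since points of the closure are told apart
by the traces of their pseudobases on the set.

A single subspace `Y` with `F, ψ_c, L ≤ κ` has size `≤ 2^κ` by closing off: a set `H` of size `2^κ`
is closed under closures of `κ`-subsets and under picking points of `Y` outside small unions of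
pseudobase members, and a point of `Y \ H` would yield a free sequence of length `κ⁺`.

If some set of size `2^κ` lies in no `X_α`, then `X` is the union of `2^κ` of the `X_α`. Otherwise
every set of size `2^κ` lies in some `X_α`; then the closed pseudobases in the `X_α` combine to
closed pseudobases in `X`, and closing off applies to `X` itself.
-/

open Cardinal Set

universe u

variable {X : Type u} [TopologicalSpace X]

/-- The Lindelöf number of the subspace `Y` is at most `κ`. -/
def LindelofLE (Y : Set X) (κ : Cardinal.{u}) : Prop :=
  ∀ U : Set (Set X), (∀ u ∈ U, IsOpen u) → Y ⊆ ⋃₀ U →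
    ∃ V ⊆ U, #V ≤ κ ∧ Y ⊆ ⋃₀ V

/-- The pseudocharacter of the subspace `Y` is at most `κ`. -/
def PseudoLE (Y : Set X) (κ : Cardinal.{u}) : Prop :=
  ∀ x ∈ Y, ∃ U : Set (Set X), (∀ u ∈ U, IsOpen u) ∧ #U ≤ κ ∧ (⋂₀ U) ∩ Y = {x}

/-- A free sequence in the subspace `Y`: a well-orderable family of points of `Y` such
that, for every cut, the closures *in `Y`* of the initial segment and of the tail are
disjoint. -/
def IsFreeSequenceIn (Y : Set X) {α : Type u} [LinearOrder α] (f : α → X) : Prop :=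
  (∀ a, f a ∈ Y) ∧
    ∀ b : α, Disjoint (closure (f '' {a | a < b}) ∩ Y) (closure (f '' {a | b ≤ a}) ∩ Y)

/-- `F(Y) ≤ κ`: every free sequence in the subspace `Y` has length at most `κ`. -/
def FreeLE (Y : Set X) (κ : Cardinal.{u}) : Prop :=
  ∀ (α : Type u) [LinearOrder α] [WellFoundedLT α] (f : α → X),
    IsFreeSequenceIn Y f → #α ≤ κ

section Cardinals

variable {α : Type u} {κ : Cardinal.{u}}

lemma mk_iUnion_le_of_le {ι : Type u} {c : Cardinal.{u}} (hc : ℵ₀ ≤ c) {f : ι → Set α}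
    (hι : #ι ≤ c) (hf : ∀ i, #(f i) ≤ c) : #(⋃ i, f i) ≤ c :=
  (mk_iUnion_le f).trans <| (mul_le_mul' hι (ciSup_le' hf)).trans (mul_eq_self hc).le

lemma mk_biUnion_le_of_le {ι : Type u} {c : Cardinal.{u}} (hc : ℵ₀ ≤ c) {s : Set ι}
    {f : ι → Set α} (hs : #s ≤ c) (hf : ∀ i ∈ s, #(f i) ≤ c) : #(⋃ i ∈ s, f i) ≤ c := by
  rw [biUnion_eq_iUnion]
  exact mk_iUnion_le_of_le hc hs fun i => hf i i.2

lemma mk_insert_le_of_le {c : Cardinal.{u}} (hc : ℵ₀ ≤ c) {s : Set α} (hs : #s ≤ c) (a : α) :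
    #(insert a s : Set α) ≤ c :=
  mk_insert_le.trans ((add_le_add hs le_rfl).trans (add_one_eq hc).le)

lemma mk_bounded_subset_le_two_pow (hκ : ℵ₀ ≤ κ) {s : Set α} (hs : #s ≤ 2 ^ κ) :
    #{t : Set α | t ⊆ s ∧ #t ≤ κ} ≤ 2 ^ κ :=
  calc #{t : Set α | t ⊆ s ∧ #t ≤ κ} ≤ max #s ℵ₀ ^ κ := mk_bounded_subset_le s κ
    _ ≤ (2 ^ κ) ^ κ := power_le_power_right (max_le hs (hκ.trans (cantor κ).le))
    _ = 2 ^ κ := by rw [← power_mul, mul_eq_self hκ]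

/-- Every point lies in the member chosen for some point of `S`. -/
theorem mk_le_of_isChain_of_not_subset {c : Cardinal.{u}} (hc : ℵ₀ ≤ c) {𝒴 : Set (Set α)}
    (hchain : IsChain (· ⊆ ·) 𝒴) (hcover : ⋃₀ 𝒴 = Set.univ) (hmem : ∀ Y ∈ 𝒴, #Y ≤ c)
    {S : Set α} (hSc : #S ≤ c) (hS : ∀ Y ∈ 𝒴, ¬ S ⊆ Y) : #α ≤ c := by
  choose M hM hxM using fun x : α => mem_sUnion.1 (hcover.symm ▸ mem_univ x)
  have hX : (Set.univ : Set α) ⊆ ⋃ s ∈ S, M s := fun x _ => by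
    obtain ⟨s, hs, hsx⟩ := not_subset.1 (hS (M x) (hM x))
    rcases hchain.total (hM x) (hM s) with h | h
    · exact mem_biUnion hs (h (hxM x))
    · exact (hsx (h (hxM s))).elim
  rw [← mk_univ]
  exact (mk_le_mk_of_subset hX).trans (mk_biUnion_le_of_le hc hSc fun s _ => hmem _ (hM s))

end Cardinals

abbrev SuccIndex (κ : Cardinal.{u}) : Type u := (Order.succ κ).ord.ToType

namespace SuccIndex

variable {κ : Cardinal.{u}}

lemma mk_eq : #(SuccIndex κ) = Order.succ κ := by
  simp [SuccIndex]

lemma not_mk_le : ¬ #(SuccIndex κ) ≤ κ := by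
  rw [mk_eq]
  exact (Order.lt_succ κ).not_ge

lemma mk_le_two_pow : #(SuccIndex κ) ≤ 2 ^ κ := by
  rw [mk_eq]
  exact Order.succ_le_of_lt (cantor κ)

lemma mk_Iio_le (i : SuccIndex κ) : #(Iio i) ≤ κ :=
  Order.lt_succ_iff.1 (by simpa using mk_Iio_lt i)

lemma mk_Iic_le (hκ : ℵ₀ ≤ κ) (i : SuccIndex κ) : #(Iic i) ≤ κ := by
  rw [← Iio_insert]
  exact mk_insert_le_of_le hκ (mk_Iio_le i) i

lemma exists_gt (hκ : ℵ₀ ≤ κ) {s : Set (SuccIndex κ)} (hs : #s ≤ κ) : ∃ b, ∀ i ∈ s, i < b := by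
  have hcof : Order.cof (SuccIndex κ) = Order.succ κ := by
    rw [Ordinal.cof_toType, (isRegular_succ hκ).cof_ord]
  by_contra! h
  have := Order.cof_le (s := s) fun a => by simpa using h a
  rw [hcof] at this
  exact (Order.lt_succ κ).not_ge (this.trans hs)

end SuccIndex

theorem exists_seq_of_forall_exists {ι β : Type*} [LinearOrder ι] [WellFoundedLT ι] [Nonempty β]
    (P : ι → (ι → β) → β → Prop)
    (hP : ∀ i f g x, (∀ j < i, f j = g j) → P i f x → P i g x)
    (step : ∀ i f, (∀ j < i, P j f (f j)) → ∃ x, P i f x) :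
    ∃ f : ι → β, ∀ i, P i f (f i) := by
  classical
  let extend (i : ι) (r : ∀ j < i, β) : ι → β := fun j => if h : j < i then r j h else
    Classical.arbitrary β
  let f : ι → β := wellFounded_lt.fix fun i r =>
    if h : ∃ x, P i (extend i r) x then h.choose else Classical.arbitrary β
  have hf (i : ι) : f i = if h : ∃ x, P i (extend i fun j _ => f j) x then h.choose
      else Classical.arbitrary β := wellFounded_lt.fix_eq _ i
  refine ⟨f, fun i => ?_⟩
  induction i using WellFoundedLT.induction with
  | _ i ih =>
    have hagree : ∀ j < i, f j = extend i (fun j _ => f j) j := fun j hj => by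
      simp only [extend, dif_pos hj]
    have hex : ∃ x, P i (extend i fun j _ => f j) x := step i _ fun j hj => by
      rw [← hagree j hj]
      exact hP j _ _ _ (fun k hk => hagree k (hk.trans hj)) (ih j hj)
    rw [hf, dif_pos hex]
    exact hP i _ _ _ (fun j hj => (hagree j hj).symm) hex.choose_spec

theorem exists_closed_under {α : Type u} {κ : Cardinal.{u}} (hκ : ℵ₀ ≤ κ)
    (Φ : Set α → Set α) (hΦ : ∀ P : Set α, #P ≤ 2 ^ κ → #(Φ P) ≤ 2 ^ κ) :
    ∃ H : Set α, #H ≤ 2 ^ κ ∧ ∀ B ⊆ H, #B ≤ κ → ∃ P, B ⊆ P ∧ Φ P ⊆ H := by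
  have h2κ : ℵ₀ ≤ (2 : Cardinal.{u}) ^ κ := hκ.trans (cantor κ).le
  obtain ⟨Hs, hHs⟩ := exists_seq_of_forall_exists (ι := SuccIndex κ)
    (fun i Hs x => x = Φ (⋃ j ∈ Iio i, Hs j))
    (fun i Hs Hs' x h hx => hx.trans (congrArg Φ (iUnion₂_congr fun j hj => by rw [h j hj])))
    (fun i Hs _ => ⟨_, rfl⟩)
  have hcard (i : SuccIndex κ) : #(Hs i) ≤ 2 ^ κ := by
    induction i using WellFoundedLT.induction with
    | _ i ih =>
      rw [hHs i]
      exact hΦ _ (mk_biUnion_le_of_le h2κ ((SuccIndex.mk_Iio_le i).trans (cantor κ).le) ih)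
  refine ⟨⋃ i, Hs i, mk_iUnion_le_of_le h2κ SuccIndex.mk_le_two_pow hcard, fun B hB hBκ => ?_⟩
  choose idx hidx using fun b : B => mem_iUnion.1 (hB b.2)
  obtain ⟨i, hi⟩ := SuccIndex.exists_gt hκ (mk_range_le.trans hBκ : #(range idx) ≤ κ)
  refine ⟨⋃ j ∈ Iio i, Hs j, fun b hb => mem_biUnion (hi _ ⟨⟨b, hb⟩, rfl⟩) (hidx ⟨b, hb⟩), ?_⟩
  rw [← hHs i]
  exact subset_iUnion Hs i

section Topology

variable {κ : Cardinal.{u}}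

structure IsClosedPseudobase (Y : Set X) (x : X) (C : Set (Set X)) : Prop where
  isOpen : ∀ W ∈ C, IsOpen W
  mem : ∀ W ∈ C, x ∈ W
  exists_notMem_closure : ∀ y ∈ Y, y ≠ x → ∃ W ∈ C, y ∉ closure W

/-- The closed pseudocharacter `ψ_c(Y)` is at most `κ`. -/
def ClosedPseudoLE (Y : Set X) (κ : Cardinal.{u}) : Prop :=
  ∀ x ∈ Y, ∃ C, IsClosedPseudobase Y x C ∧ #C ≤ κ

lemma IsClosedPseudobase.eq_of_forall_mem_closure {Y : Set X} {x y : X} {C : Set (Set X)}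
    (hC : IsClosedPseudobase Y x C) (hy : y ∈ Y) (h : ∀ W ∈ C, y ∈ closure W) : y = x := by
  by_contra hne
  obtain ⟨W, hW, hyW⟩ := hC.exists_notMem_closure y hy hne
  exact hyW (h W hW)

lemma LindelofLE.exists_subcover {Y : Set X} (hY : LindelofLE Y κ) (W : X → Set X)
    (hW : ∀ y ∈ Y, IsOpen (W y) ∧ y ∈ W y) : ∃ T ⊆ Y, #T ≤ κ ∧ Y ⊆ ⋃ y ∈ T, W y := by
  obtain ⟨V, hVW, hVκ, hYV⟩ := hY (W '' Y) (forall_mem_image.2 fun y hy => (hW y hy).1)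
    fun y hy => mem_sUnion.2 ⟨W y, mem_image_of_mem W hy, (hW y hy).2⟩
  obtain ⟨T, hTY, hTinj, rfl⟩ := SurjOn.exists_subset_injOn_image_eq (hVW : SurjOn W Y V)
  refine ⟨T, hTY, ?_, ?_⟩
  · rwa [← mk_image_eq_of_injOn W T hTinj]
  · rwa [← sUnion_image]

lemma LindelofLE.closed_inter {Y F : Set X} (hY : LindelofLE Y κ) (hF : IsClosed F) :
    LindelofLE (F ∩ Y) κ := by
  intro U hU hFU
  obtain ⟨V, hVU, hVκ, hYV⟩ := hY (insert Fᶜ U) (forall_mem_insert.2 ⟨hF.isOpen_compl, hU⟩)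
    fun y hy => by
      by_cases hyF : y ∈ F
      · obtain ⟨u, hu, hyu⟩ := hFU ⟨hyF, hy⟩
        exact ⟨u, mem_insert_of_mem _ hu, hyu⟩
      · exact ⟨Fᶜ, mem_insert _ _, hyF⟩
  refine ⟨V \ {Fᶜ}, fun v hv => (hVU hv.1).resolve_left hv.2,
    (mk_le_mk_of_subset sdiff_subset).trans hVκ, fun y hy => ?_⟩
  obtain ⟨v, hv, hyv⟩ := hYV hy.2
  exact ⟨v, ⟨hv, fun hvF => (hvF ▸ hyv) hy.1⟩, hyv⟩

lemma LindelofLE.exists_closure_separating [T2Space X] {Y u : Set X} (hY : LindelofLE Y κ)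
    (hu : IsOpen u) {x : X} (hxu : x ∈ u) :
    ∃ C : Set (Set X), (∀ W ∈ C, IsOpen W ∧ x ∈ W) ∧ #C ≤ κ ∧
      ∀ y ∈ Y \ u, ∃ W ∈ C, y ∉ closure W := by
  classical
  choose! A B hA hB hyA hxB hAB using fun y (hy : y ≠ x) => t2_separation hy
  have hne {y : X} (hyu : y ∉ u) : y ≠ x := fun h => hyu (h ▸ hxu)
  obtain ⟨T, -, hTκ, hYT⟩ := hY.exists_subcover (fun y => if y ∈ u then u else A y)
    fun y _ => by
      by_cases hyu : y ∈ u
      · simp only [if_pos hyu]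
        exact ⟨hu, hyu⟩
      · simp only [if_neg hyu]
        exact ⟨hA y (hne hyu), hyA y (hne hyu)⟩
  refine ⟨B '' (T \ u), forall_mem_image.2 fun y hy => ⟨hB y (hne hy.2), hxB y (hne hy.2)⟩,
    mk_image_le.trans ((mk_le_mk_of_subset sdiff_subset).trans hTκ), fun y hy => ?_⟩
  obtain ⟨z, hzT, hyz⟩ := mem_iUnion₂.1 (hYT hy.1)
  have hzu : z ∉ u := fun hzu => hy.2 (by simpa [hzu] using hyz)
  rw [if_neg hzu] at hyz
  exact ⟨B z, mem_image_of_mem B ⟨hzT, hzu⟩,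
    disjoint_left.1 ((hAB z (hne hzu)).closure_right (hA z (hne hzu))) hyz⟩

theorem ClosedPseudoLE.of_pseudoLE [T2Space X] (hκ : ℵ₀ ≤ κ) {Y : Set X}
    (hψ : PseudoLE Y κ) (hL : LindelofLE Y κ) : ClosedPseudoLE Y κ := by
  intro x hx
  obtain ⟨U, hUo, hUκ, hUx⟩ := hψ x hx
  have hxU : ∀ u ∈ U, x ∈ u := fun u hu => (hUx.symm ▸ mem_singleton x : x ∈ ⋂₀ U ∩ Y).1 u hu
  choose! C hCo hCκ hCsep using fun u hu => hL.exists_closure_separating (hUo u hu) (hxU u hu)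
  refine ⟨⋃ u ∈ U, C u, ⟨fun W hW => ?_, fun W hW => ?_, fun y hy hyx => ?_⟩,
    mk_biUnion_le_of_le hκ hUκ hCκ⟩
  · obtain ⟨u, hu, hW⟩ := mem_iUnion₂.1 hW
    exact (hCo u hu W hW).1
  · obtain ⟨u, hu, hW⟩ := mem_iUnion₂.1 hW
    exact (hCo u hu W hW).2
  · have hyU : y ∉ ⋂₀ U := fun h => hyx (hUx ▸ ⟨h, hy⟩ : y ∈ ({x} : Set X))
    obtain ⟨u, hu, hyu⟩ : ∃ u ∈ U, y ∉ u := by simpa [mem_sInter] using hyU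
    obtain ⟨W, hW, hyW⟩ := hCsep u hu y ⟨hy, hyu⟩
    exact ⟨W, mem_biUnion hu hW, hyW⟩

end Topology

section Counting

variable {κ : Cardinal.{u}}

lemma mem_closure_of_inter_eq {B W W' : Set X} {y : X} (hy : y ∈ closure B) (hW' : IsOpen W')
    (hyW' : y ∈ W') (h : W' ∩ B = W ∩ B) : y ∈ closure W :=
  closure_mono inter_subset_left (h ▸ hW'.inter_closure ⟨hyW', hy⟩)

/-- Points of `closure B` are told apart by the traces on `B` of their neighbourhood families,
and there are at most `(2 ^ κ) ^ κ` such traces. -/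
theorem mk_le_two_pow_of_separating (hκ : ℵ₀ ≤ κ) {B S : Set X} (hB : #B ≤ κ)
    (hSB : S ⊆ closure B) (D : X → Set (Set X)) (hDo : ∀ y ∈ S, ∀ W ∈ D y, IsOpen W ∧ y ∈ W)
    (hDκ : ∀ y ∈ S, #(D y) ≤ κ)
    (hsep : ∀ y ∈ S, ∀ z ∈ S, y ≠ z → (∃ W ∈ D z, y ∉ closure W) ∨ ∃ W ∈ D y, z ∉ closure W) :
    #S ≤ 2 ^ κ := by
  let trace (y : X) : Set (Set X) := (· ∩ B) '' D y
  have key : ∀ y ∈ S, ∀ z : X, trace y = trace z → ∀ W ∈ D z, y ∈ closure W := by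
    intro y hy z hyz W hW
    obtain ⟨W', hW', hW'W⟩ : W ∩ B ∈ trace y := hyz ▸ mem_image_of_mem _ hW
    exact mem_closure_of_inter_eq (hSB hy) (hDo y hy W' hW').1 (hDo y hy W' hW').2 hW'W
  have hinj : InjOn trace S := by
    intro y hy z hz hyz
    by_contra hne
    rcases hsep y hy z hz hne with ⟨W, hW, hyW⟩ | ⟨W, hW, hzW⟩
    · exact hyW (key y hy z hyz W hW)
    · exact hzW (key z hz y hyz.symm W hW)
  have hmaps : trace '' S ⊆ {𝒯 | 𝒯 ⊆ 𝒫 B ∧ #𝒯 ≤ κ} := by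
    rintro _ ⟨y, hy, rfl⟩
    exact ⟨image_subset_iff.2 fun W _ => inter_subset_right, mk_image_le.trans (hDκ y hy)⟩
  rw [← mk_image_eq_of_injOn trace S hinj]
  refine (mk_le_mk_of_subset hmaps).trans (mk_bounded_subset_le_two_pow hκ ?_)
  rw [mk_powerset]
  exact power_le_power_left two_ne_zero hB

theorem ClosedPseudoLE.mk_closure_inter_le (hκ : ℵ₀ ≤ κ) {Y B : Set X}
    (hY : ClosedPseudoLE Y κ) (hB : #B ≤ κ) : #(closure B ∩ Y : Set X) ≤ 2 ^ κ := by
  choose! D hD hDκ using hY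
  exact mk_le_two_pow_of_separating hκ hB inter_subset_left D
    (fun y hy W hW => ⟨(hD y hy.2).isOpen W hW, (hD y hy.2).mem W hW⟩)
    (fun y hy => hDκ y hy.2)
    fun y hy z hz hyz => Or.inl ((hD z hz.2).exists_notMem_closure y hy.2 hyz)

theorem mk_closure_le_of_isChain (hκ : ℵ₀ ≤ κ) {𝒴 : Set (Set X)}
    (hchain : IsChain (· ⊆ ·) 𝒴) (hcover : ⋃₀ 𝒴 = Set.univ) (hψ : ∀ Y ∈ 𝒴, ClosedPseudoLE Y κ)
    {B : Set X} (hB : #B ≤ κ) : #(closure B) ≤ 2 ^ κ := by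
  choose M hM hxM using fun x : X => mem_sUnion.1 (hcover.symm ▸ mem_univ x)
  choose D hD hDκ using fun x => hψ (M x) (hM x) x (hxM x)
  refine mk_le_two_pow_of_separating hκ hB subset_rfl D
    (fun y _ W hW => ⟨(hD y).isOpen W hW, (hD y).mem W hW⟩) (fun y _ => hDκ y)
    fun y _ z _ hyz => ?_
  rcases hchain.total (hM y) (hM z) with h | h
  · exact Or.inl ((hD z).exists_notMem_closure y (h (hxM y)) hyz)
  · exact Or.inr ((hD y).exists_notMem_closure z (h (hxM z)) hyz.symm)

end Counting

section FreeSequences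

variable {κ : Cardinal.{u}}

lemma IsFreeSequenceIn.mono {α : Type u} [LinearOrder α] {Y Z : Set X} {f : α → X}
    (hf : IsFreeSequenceIn Y f) (hZY : Z ⊆ Y) (hfZ : ∀ a, f a ∈ Z) : IsFreeSequenceIn Z f :=
  ⟨hfZ, fun b => (hf.2 b).mono (inter_subset_inter_right _ hZY) (inter_subset_inter_right _ hZY)⟩

lemma isFreeSequenceIn_of_isOpen_separating {α : Type u} [LinearOrder α] {Y : Set X} {f : α → X}
    (O : α → Set X) (hO : ∀ b, IsOpen (O b)) (hfY : ∀ i, f i ∈ Y)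
    (hinit : ∀ b, closure (f '' Iio b) ∩ Y ⊆ O b) (htail : ∀ b i, b ≤ i → f i ∉ O b) :
    IsFreeSequenceIn Y f := by
  refine ⟨hfY, fun b => disjoint_left.2 fun x hx hx' => ?_⟩
  have hclosure : closure (f '' Ici b) ⊆ (O b)ᶜ :=
    closure_minimal (by rintro _ ⟨i, hi, rfl⟩; exact htail b i hi) (hO b).isClosed_compl
  exact hclosure hx'.1 (hinit b hx)

lemma FreeLE.not_isFreeSequenceIn {Y : Set X} (hF : FreeLE Y κ) (f : SuccIndex κ → X) :
    ¬ IsFreeSequenceIn Y f :=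
  fun hf => SuccIndex.not_mk_le (hF _ f hf)

/-- For `W ∈ C`, the indices `i` with `t i ∉ closure W` index a free sequence, hence are bounded;
beyond all these bounds `t` lies in every `closure W`, so equals `q`. -/
theorem FreeLE.false_of_closure_inter_subset (hκ : ℵ₀ ≤ κ) {Y : Set X} (hF : FreeLE Y κ)
    {q : X} {C : Set (Set X)} (hC : IsClosedPseudobase Y q C) (hCκ : #C ≤ κ)
    (t : SuccIndex κ → X) (htY : ∀ i, t i ∈ Y) (htq : ∀ i, t i ≠ q)
    (hcut : ∀ b, closure (t '' Iio b) ∩ closure (t '' Ici b) ∩ Y ⊆ {q}) : False := by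
  have hfree (W : Set X) (hW : W ∈ C) : #{i | t i ∉ closure W} ≤ κ := by
    refine hF _ (fun i : {i | t i ∉ closure W} => t i) ⟨fun i => htY i, fun b => ?_⟩
    have hinit : closure ((fun i : {i | t i ∉ closure W} => t i) '' {a | a < b}) ⊆ Wᶜ :=
      closure_minimal (by rintro _ ⟨a, -, rfl⟩ haW; exact a.2 (subset_closure haW))
        (hC.isOpen W hW).isClosed_compl
    rw [disjoint_left]
    rintro x ⟨hx, hxY⟩ ⟨hx', -⟩
    have hxq : x = q := hcut b ⟨⟨closure_mono (by rintro _ ⟨a, ha, rfl⟩; exact ⟨a, ha, rfl⟩) hx,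
      closure_mono (by rintro _ ⟨a, ha, rfl⟩; exact ⟨a, ha, rfl⟩) hx'⟩, hxY⟩
    exact hinit hx (hxq ▸ hC.mem W hW)
  obtain ⟨b, hb⟩ := SuccIndex.exists_gt hκ (mk_biUnion_le_of_le hκ hCκ hfree)
  refine htq b (hC.eq_of_forall_mem_closure (htY b) fun W hW => ?_)
  by_contra hbW
  exact lt_irrefl b (hb b (mem_biUnion hW hbW))

end FreeSequences

section ClosingOff

variable {κ : Cardinal.{u}}

lemma exists_guard {Y B H : Set X} {D : X → Set (Set X)}
    (hD : ∀ z ∈ Y, IsClosedPseudobase Y z (D z)) (hL : LindelofLE (closure B ∩ Y) κ)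
    (hBH : closure B ∩ Y ⊆ H) {q : X} (hqY : q ∈ Y) (hqH : q ∉ H) :
    ∃ 𝒢 ⊆ ⋃ z ∈ H ∩ Y, D z, #𝒢 ≤ κ ∧ IsOpen (⋃₀ 𝒢) ∧ (∀ W ∈ 𝒢, q ∉ closure W) ∧
      closure B ∩ Y ⊆ ⋃₀ 𝒢 := by
  have hsep : ∀ z ∈ closure B ∩ Y, ∃ W ∈ D z, q ∉ closure W := fun z hz =>
    (hD z hz.2).exists_notMem_closure q hqY fun h => hqH (hBH (h ▸ hz))
  choose! W hWD hqW using hsep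
  obtain ⟨T, hTB, hTκ, hBT⟩ := hL.exists_subcover W fun z hz =>
    ⟨(hD z hz.2).isOpen _ (hWD z hz), (hD z hz.2).mem _ (hWD z hz)⟩
  refine ⟨W '' T, image_subset_iff.2 fun z hz => ?_, mk_image_le.trans hTκ,
    isOpen_sUnion (forall_mem_image.2 fun z hz => (hD z (hTB hz).2).isOpen _ (hWD z (hTB hz))),
    forall_mem_image.2 fun z hz => hqW z (hTB hz), by rwa [sUnion_image]⟩
  exact mem_biUnion ⟨hBH (hTB hz), (hTB hz).2⟩ (hWD z (hTB hz))

/-- `a ζ` is picked outside the guards of all initial segments `a '' Iio η`, `η ≤ ζ`; so at each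
cut the guard of the initial segment separates its closure from the tail. -/
theorem exists_isFreeSequenceIn_of_notMem (hκ : ℵ₀ ≤ κ) {Y H : Set X} {D : X → Set (Set X)}
    {c : Set (Set X) → X} (hD : ∀ z ∈ Y, IsClosedPseudobase Y z (D z))
    (hL : ∀ B : Set X, #B ≤ κ → LindelofLE (closure B ∩ Y) κ)
    (hc : ∀ V, (Y \ ⋃₀ V).Nonempty → c V ∈ Y \ ⋃₀ V)
    (hHcl : ∀ B ⊆ H, #B ≤ κ → closure B ∩ Y ⊆ H)
    (hHc : ∀ V : Set (Set X), V ⊆ ⋃ z ∈ H ∩ Y, D z → #V ≤ κ → c V ∈ H)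
    {q : X} (hqY : q ∈ Y) (hqH : q ∉ H) : ∃ f : SuccIndex κ → X, IsFreeSequenceIn Y f := by
  have : Nonempty X := ⟨q⟩
  choose! G hGD hGκ hGo hGq hGcov using fun B (hBH : B ⊆ H) (hBκ : #B ≤ κ) =>
    exists_guard hD (hL B hBκ) (hHcl B hBH hBκ) hqY hqH
  have hsmall (a : SuccIndex κ → X) (η : SuccIndex κ) : #(a '' Iio η) ≤ κ :=
    mk_image_le.trans (SuccIndex.mk_Iio_le η)
  obtain ⟨a, ha⟩ : ∃ a : SuccIndex κ → X, ∀ ζ,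
      a ζ ∈ H ∧ a ζ ∈ Y ∧ ∀ η ≤ ζ, a ζ ∉ ⋃₀ G (a '' Iio η) := by
    refine exists_seq_of_forall_exists (fun ζ a x => x ∈ H ∧ x ∈ Y ∧ ∀ η ≤ ζ, x ∉ ⋃₀ G (a '' Iio η))
      (fun ζ a a' x h hx => ?_) fun ζ a ih => ?_
    · refine ⟨hx.1, hx.2.1, fun η hη => ?_⟩
      have : a '' Iio η = a' '' Iio η := image_congr fun j hj => h j (lt_of_lt_of_le hj hη)
      exact this ▸ hx.2.2 η hη
    have hsub {η : SuccIndex κ} (hη : η ≤ ζ) : a '' Iio η ⊆ H := by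
      rintro _ ⟨j, hj, rfl⟩
      exact (ih j (lt_of_lt_of_le hj hη)).1
    let V := ⋃ η ∈ Iic ζ, G (a '' Iio η)
    have hqV : q ∉ ⋃₀ V := by
      rintro ⟨W, hWV, hqW⟩
      obtain ⟨η, hη, hW⟩ := mem_iUnion₂.1 hWV
      exact hGq _ (hsub hη) (hsmall a η) W hW (subset_closure hqW)
    have hcV := hc V ⟨q, hqY, hqV⟩
    refine ⟨c V, hHc V (iUnion₂_subset fun η hη => hGD _ (hsub hη) (hsmall a η)) ?_, hcV.1,
      fun η hη hcW => hcV.2 ?_⟩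
    · exact mk_biUnion_le_of_le hκ (SuccIndex.mk_Iic_le hκ ζ) fun η hη =>
        hGκ _ (hsub hη) (hsmall a η)
    · exact sUnion_mono (subset_biUnion_of_mem (u := fun η => G (a '' Iio η)) hη) hcW
  have hsub (b : SuccIndex κ) : a '' Iio b ⊆ H := by
    rintro _ ⟨j, -, rfl⟩
    exact (ha j).1
  exact ⟨a, isFreeSequenceIn_of_isOpen_separating (fun b => ⋃₀ G (a '' Iio b))
    (fun b => hGo _ (hsub b) (hsmall a b)) (fun i => (ha i).2.1)
    (fun b => hGcov _ (hsub b) (hsmall a b)) fun b i hbi => (ha i).2.2 b hbi⟩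

theorem mk_le_two_pow_of_closedPseudoLE (hκ : ℵ₀ ≤ κ) {Y : Set X} (hψ : ClosedPseudoLE Y κ)
    (hL : ∀ B : Set X, #B ≤ κ → LindelofLE (closure B ∩ Y) κ)
    (hF : ∀ f : SuccIndex κ → X, ¬ IsFreeSequenceIn Y f) : #Y ≤ 2 ^ κ := by
  rcases isEmpty_or_nonempty X with hX | hX
  · simp
  have h2κ : ℵ₀ ≤ (2 : Cardinal.{u}) ^ κ := hκ.trans (cantor κ).le
  have hclosure (B : Set X) (hB : #B ≤ κ) := hψ.mk_closure_inter_le hκ hB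
  choose! D hD hDκ using hψ
  let c (V : Set (Set X)) : X := Classical.epsilon (· ∈ Y \ ⋃₀ V)
  have hc (V : Set (Set X)) (h : (Y \ ⋃₀ V).Nonempty) : c V ∈ Y \ ⋃₀ V := Classical.epsilon_spec h
  let Φ (P : Set X) : Set X := (⋃ B ∈ {B | B ⊆ P ∧ #B ≤ κ}, closure B ∩ Y) ∪
    c '' {V | V ⊆ ⋃ z ∈ P ∩ Y, D z ∧ #V ≤ κ}
  have hΦ (P : Set X) (hP : #P ≤ 2 ^ κ) : #(Φ P) ≤ 2 ^ κ := by
    refine (mk_union_le _ _).trans ((add_le_add ?_ ?_).trans (add_eq_self h2κ).le)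
    · exact mk_biUnion_le_of_le h2κ (mk_bounded_subset_le_two_pow hκ hP)
        fun B hB => hclosure B hB.2
    · refine mk_image_le.trans (mk_bounded_subset_le_two_pow hκ ?_)
      exact mk_biUnion_le_of_le h2κ ((mk_le_mk_of_subset inter_subset_left).trans hP)
        fun z hz => (hDκ z hz.2).trans (cantor κ).le
  obtain ⟨H, hHκ, hH⟩ := exists_closed_under hκ Φ hΦ
  refine (mk_le_mk_of_subset fun q hqY => ?_).trans hHκ
  by_contra hqH
  refine (exists_isFreeSequenceIn_of_notMem hκ hD hL hc (H := H) ?_ ?_ hqY hqH).elim hF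
  · intro B hBH hBκ
    obtain ⟨P, hBP, hPH⟩ := hH B hBH hBκ
    exact fun x hx => hPH (Or.inl (mem_biUnion (show B ∈ {B | B ⊆ P ∧ #B ≤ κ} from ⟨hBP, hBκ⟩) hx))
  · intro V hVD hVκ
    choose! z hz hVz using fun W (hW : W ∈ V) => mem_iUnion₂.1 (hVD hW)
    obtain ⟨P, hzP, hPH⟩ := hH (z '' V) (image_subset_iff.2 fun W hW => (hz W hW).1)
      (mk_image_le.trans hVκ)
    refine hPH (Or.inr ⟨V, ⟨fun W hW => ?_, hVκ⟩, rfl⟩)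
    exact mem_biUnion ⟨hzP (mem_image_of_mem z hW), (hz W hW).2⟩ (hVz W hW)

end ClosingOff

section Chains

variable {κ : Cardinal.{u}} {𝒴 : Set (Set X)}

/-- Failing this, a sequence `t` could be chosen in the closures of the pseudobases of ever larger
members, each `t ρ` escaping the member that contains the closure of its initial segment; inside a
member containing all of `t` this contradicts `F ≤ κ`. -/
theorem exists_small_separating_subfamily (hκ : ℵ₀ ≤ κ) (hchain : IsChain (· ⊆ ·) 𝒴)
    (hcover : ⋃₀ 𝒴 = Set.univ) (hF : ∀ Y ∈ 𝒴, FreeLE Y κ) (hψ : ∀ Y ∈ 𝒴, ClosedPseudoLE Y κ)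
    (hS : ∀ S : Set X, #S ≤ 2 ^ κ → ∃ Y ∈ 𝒴, S ⊆ Y) {q : X} {Cq : Set X → Set (Set X)}
    (hCq : ∀ Y, Y ∈ 𝒴 ∧ q ∈ Y → IsClosedPseudobase Y q (Cq Y)) :
    ∃ 𝒵 ⊆ {Y | Y ∈ 𝒴 ∧ q ∈ Y}, #𝒵 ≤ κ ∧ ∀ y ≠ q, ∃ Y ∈ 𝒵, ∃ W ∈ Cq Y, y ∉ closure W := by
  have h2κ : ℵ₀ ≤ (2 : Cardinal.{u}) ^ κ := hκ.trans (cantor κ).le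
  have : Nonempty X := ⟨q⟩
  by_contra! hunb
  choose! lev hlev hqlev using fun (S : Set X) (hSκ : #S ≤ κ) => hS _ (mk_insert_le_of_le h2κ
    (mk_closure_le_of_isChain hκ hchain hcover hψ hSκ) q)
  have hsmall (t : SuccIndex κ → X) (η : SuccIndex κ) : #(t '' Iio η) ≤ κ :=
    mk_image_le.trans (SuccIndex.mk_Iio_le η)
  have hlevq (t : SuccIndex κ → X) (η : SuccIndex κ) :
      lev (t '' Iio η) ∈ 𝒴 ∧ q ∈ lev (t '' Iio η) :=
    ⟨hlev _ (hsmall t η), hqlev _ (hsmall t η) (mem_insert _ _)⟩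
  obtain ⟨t, ht⟩ := exists_seq_of_forall_exists (ι := SuccIndex κ)
    (fun ρ t x => x ≠ q ∧ ∀ η ≤ ρ, ∀ W ∈ Cq (lev (t '' Iio η)), x ∈ closure W)
    (fun ρ t t' x h hx => ⟨hx.1, fun η hη => by
      have : t '' Iio η = t' '' Iio η := image_congr fun j hj => h j (lt_of_lt_of_le hj hη)
      exact this ▸ hx.2 η hη⟩)
    fun ρ t _ => (hunb ((fun η => lev (t '' Iio η)) '' Iic ρ)
      (image_subset_iff.2 fun η _ => hlevq t η) (mk_image_le.trans (SuccIndex.mk_Iic_le hκ ρ))).imp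
      fun y hy => ⟨hy.1, fun η hη => hy.2 _ (mem_image_of_mem _ hη)⟩
  obtain ⟨Z, hZ, hZt⟩ := hS (insert q (range t))
    (mk_insert_le_of_le h2κ (mk_range_le.trans SuccIndex.mk_le_two_pow) q)
  obtain ⟨C, hC, hCκ⟩ := hψ Z hZ q (hZt (mem_insert _ _))
  refine (hF Z hZ).false_of_closure_inter_subset hκ hC hCκ t
    (fun i => hZt (mem_insert_of_mem _ ⟨i, rfl⟩)) (fun i => (ht i).1) fun b x hx => ?_
  obtain ⟨⟨hxinit, hxtail⟩, -⟩ := hx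
  refine (hCq _ (hlevq t b)).eq_of_forall_mem_closure
    (hqlev _ (hsmall t b) (mem_insert_of_mem _ hxinit)) fun W hW => ?_
  exact closure_minimal (by rintro _ ⟨ζ, hζ, rfl⟩; exact (ht ζ).2 b hζ W hW) isClosed_closure
    hxtail

theorem closedPseudoLE_univ_of_isChain (hκ : ℵ₀ ≤ κ) (hchain : IsChain (· ⊆ ·) 𝒴)
    (hcover : ⋃₀ 𝒴 = Set.univ) (hF : ∀ Y ∈ 𝒴, FreeLE Y κ) (hψ : ∀ Y ∈ 𝒴, ClosedPseudoLE Y κ)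
    (hS : ∀ S : Set X, #S ≤ 2 ^ κ → ∃ Y ∈ 𝒴, S ⊆ Y) : ClosedPseudoLE (Set.univ : Set X) κ := by
  rintro q -
  choose! Cq hCq hCqκ using fun Y (hY : Y ∈ 𝒴 ∧ q ∈ Y) => hψ Y hY.1 q hY.2
  obtain ⟨𝒵, h𝒵, h𝒵κ, hsep⟩ :=
    exists_small_separating_subfamily hκ hchain hcover hF hψ hS hCq
  refine ⟨⋃ Y ∈ 𝒵, Cq Y, ⟨fun W hW => ?_, fun W hW => ?_, fun y _ hyq => ?_⟩,
    mk_biUnion_le_of_le hκ h𝒵κ fun Y hY => hCqκ Y (h𝒵 hY)⟩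
  · obtain ⟨Y, hY, hW⟩ := mem_iUnion₂.1 hW
    exact (hCq Y (h𝒵 hY)).isOpen W hW
  · obtain ⟨Y, hY, hW⟩ := mem_iUnion₂.1 hW
    exact (hCq Y (h𝒵 hY)).mem W hW
  · obtain ⟨Y, hY, W, hW, hyW⟩ := hsep y hyq
    exact ⟨W, mem_biUnion hY hW, hyW⟩

theorem mk_le_two_pow_of_isChain_of_forall_subset (hκ : ℵ₀ ≤ κ) (hchain : IsChain (· ⊆ ·) 𝒴)
    (hcover : ⋃₀ 𝒴 = Set.univ) (hF : ∀ Y ∈ 𝒴, FreeLE Y κ) (hψ : ∀ Y ∈ 𝒴, ClosedPseudoLE Y κ)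
    (hL : ∀ Y ∈ 𝒴, LindelofLE Y κ) (hS : ∀ S : Set X, #S ≤ 2 ^ κ → ∃ Y ∈ 𝒴, S ⊆ Y) :
    #X ≤ 2 ^ κ := by
  rw [← mk_univ]
  refine mk_le_two_pow_of_closedPseudoLE hκ
    (closedPseudoLE_univ_of_isChain hκ hchain hcover hF hψ hS) (fun B hB => ?_) fun f hf => ?_
  · obtain ⟨Y, hY, hBY⟩ := hS _ (mk_closure_le_of_isChain hκ hchain hcover hψ hB)
    rw [inter_univ, ← inter_eq_left.2 hBY]
    exact (hL Y hY).closed_inter isClosed_closure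
  · obtain ⟨Y, hY, hfY⟩ := hS (range f) (mk_range_le.trans SuccIndex.mk_le_two_pow)
    exact (hF Y hY).not_isFreeSequenceIn f (hf.mono (subset_univ Y) fun i => hfY ⟨i, rfl⟩)

theorem mk_le_two_pow_of_isChain [T2Space X] (hκ : ℵ₀ ≤ κ) (hchain : IsChain (· ⊆ ·) 𝒴)
    (hcover : ⋃₀ 𝒴 = Set.univ) (hF : ∀ Y ∈ 𝒴, FreeLE Y κ) (hψ : ∀ Y ∈ 𝒴, PseudoLE Y κ)
    (hL : ∀ Y ∈ 𝒴, LindelofLE Y κ) : #X ≤ 2 ^ κ := by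
  have hψc (Y : Set X) (hY : Y ∈ 𝒴) : ClosedPseudoLE Y κ :=
    .of_pseudoLE hκ (hψ Y hY) (hL Y hY)
  by_cases hS : ∀ S : Set X, #S ≤ 2 ^ κ → ∃ Y ∈ 𝒴, S ⊆ Y
  · exact mk_le_two_pow_of_isChain_of_forall_subset hκ hchain hcover hF hψc hL hS
  · obtain ⟨S, hSκ, hSY⟩ : ∃ S : Set X, #S ≤ 2 ^ κ ∧ ∀ Y ∈ 𝒴, ¬ S ⊆ Y := by
      simpa using hS
    refine mk_le_of_isChain_of_not_subset (hκ.trans (cantor κ).le) hchain hcover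
      (fun Y hY => ?_) hSκ hSY
    exact mk_le_two_pow_of_closedPseudoLE hκ (hψc Y hY)
      (fun B _ => (hL Y hY).closed_inter isClosed_closure) (hF Y hY).not_isFreeSequenceIn

end Chains

/-- If the Hausdorff space `X` is the increasing union of subspaces `X_α` (`α < λ`) with
`F(X_α) ≤ κ`, `ψ(X_α) ≤ κ` and `L(X_α) ≤ κ` (`κ` infinite), then `|X| ≤ 2^κ`. -/
theorem statement9 [T2Space X] {κ : Cardinal.{u}} (hκ : ℵ₀ ≤ κ)
    {lam : Ordinal.{u}} (Xs : Ordinal.{u} → Set X)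
    (hunion : (Set.univ : Set X) = ⋃ α ∈ Set.Iio lam, Xs α)
    (hmono : ∀ α β : Ordinal.{u}, α < β → β < lam → Xs α ⊆ Xs β)
    (hF : ∀ α < lam, FreeLE (Xs α) κ)
    (hψ : ∀ α < lam, PseudoLE (Xs α) κ)
    (hL : ∀ α < lam, LindelofLE (Xs α) κ) :
    #X ≤ 2 ^ κ := by
  have hchain : IsChain (· ⊆ ·) (Xs '' Iio lam) := by
    rintro _ ⟨α, hα, rfl⟩ _ ⟨β, hβ, rfl⟩ -
    rcases le_or_gt α β with h | h
    · exact Or.inl (h.eq_or_lt.elim (fun h => h ▸ subset_rfl) fun h => hmono α β h hβ)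
    · exact Or.inr (hmono β α h hα)
  exact mk_le_two_pow_of_isChain hκ hchain (by rw [sUnion_image, hunion])
    (forall_mem_image.2 hF) (forall_mem_image.2 hψ) (forall_mem_image.2 hL)
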